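/- arXiv:2311.13369 — 4 statements merged into one kernel-verified Lean document; each statement's English description precedes it below -/
import Mathlib

section
/- Every 3-partite tournament D with minimum out-degree at least 2k-1 contains k vertex-disjoint directed cycles. -/
/-- `c : ZMod m → V` is a directed cycle of length `m` (arcs `c i → c (i+1)`). -/
def IsCycleOn {V : Type*} (A : V → V → Prop) (m : ℕ) (c : ZMod m → V) : Prop :=
  2 ≤ m ∧ Function.Injective c ∧ ∀ i : ZMod m, A (c i) (c (i + 1))

/-- A family of `k` pairwise vertex-disjoint directed cycles, of lengths `m i`. -/
def DisjointCycles {V : Type*} (A : V → V → Prop) (k : ℕ) (m : Fin k → ℕ)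
    (c : ∀ i : Fin k, ZMod (m i) → V) : Prop :=
  (∀ i, IsCycleOn A (m i) (c i)) ∧
    ∀ i j, i ≠ j → Disjoint (Set.range (c i)) (Set.range (c j))

/-- The digraph with arc relation `A` has `k` pairwise vertex-disjoint directed cycles. -/
def HasKDisjointCycles {V : Type*} (A : V → V → Prop) (k : ℕ) : Prop :=
  ∃ (m : Fin k → ℕ) (c : ∀ i, ZMod (m i) → V), DisjointCycles A k m c

/-- The digraph with arc relation `A` has `k` pairwise vertex-disjoint directed triangles. -/
def HasKDisjointTriangles {V : Type*} (A : V → V → Prop) (k : ℕ) : Prop :=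
  ∃ c : ∀ _ : Fin k, ZMod 3 → V, DisjointCycles A k (fun _ => 3) c

/-- `A` is (the arc relation of) a multipartite tournament with partition map `p`. -/
structure IsMultipartiteTournament {V ι : Type*} (A : V → V → Prop) (p : V → ι) : Prop where
  not_adj_same : ∀ x y, p x = p y → ¬ A x y
  total : ∀ x y, p x ≠ p y → A x y ∨ A y x
  asymm : ∀ x y, A x y → ¬ A y x

/-- Every vertex has out-degree at least `d`. -/
def MinOutDegreeAtLeast {V : Type*} (A : V → V → Prop) (d : ℕ) : Prop :=
  ∀ v : V, d ≤ Nat.card {u : V // A v u}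

/-!
Pass to a terminal strong component `C`: no arc leaves it, so it inherits the minimum
out-degree. If `C` contains a directed triangle, every vertex of `C` is non-adjacent to the
triangle vertex in its own part, so deleting the triangle costs each remaining vertex at most two
out-neighbours, and induction applies to the rest of `C`. If `C` is triangle-free, a vertex of
minimum out-degree in `C` lies on a 4-cycle, and Bondy's argument makes `C` bipartite: a vertex
of a third part would dominate the whole 4-cycle or be dominated by it, which the strong
connectivity of `C` rules out. In the bipartite `C` the 4-cycle again costs every vertex at most
two out-neighbours.
-/

open Finset Function

section

variable {V ι : Type*} {A : V → V → Prop} {p : V → ι}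

namespace IsMultipartiteTournament

theorem irrefl (hmt : IsMultipartiteTournament A p) (v : V) : ¬ A v v :=
  hmt.not_adj_same v v rfl

theorem ne_of_adj (hmt : IsMultipartiteTournament A p) {u v : V} (h : A u v) : p u ≠ p v :=
  fun he => hmt.not_adj_same u v he h

theorem adj_of_not_adj (hmt : IsMultipartiteTournament A p) {u v : V} (huv : p u ≠ p v)
    (h : ¬ A v u) : A u v :=
  (hmt.total u v huv).resolve_right h

protected theorem swap (hmt : IsMultipartiteTournament A p) :
    IsMultipartiteTournament (swap A) p :=
  ⟨fun u v h => hmt.not_adj_same v u h.symm, fun u v h => hmt.total v u h.symm,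
    fun u v h => hmt.asymm v u h⟩

theorem isCycleOn_three (hmt : IsMultipartiteTournament A p) {a b c : V} (hab : A a b)
    (hbc : A b c) (hca : A c a) : IsCycleOn A 3 ![a, b, c] := by
  have hab' : a ≠ b := fun h => hmt.irrefl a (h ▸ hab)
  have hbc' : b ≠ c := fun h => hmt.irrefl b (h ▸ hbc)
  have hca' : c ≠ a := fun h => hmt.irrefl c (h ▸ hca)
  refine ⟨by norm_num, fun i j h => ?_, fun i => ?_⟩
  · fin_cases i <;> fin_cases j <;> first | rfl | simp_all [eq_comm]
  · fin_cases i <;> simpa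

theorem isCycleOn_four (hmt : IsMultipartiteTournament A p) {a b c d : V} (hab : A a b)
    (hbc : A b c) (hcd : A c d) (hda : A d a) : IsCycleOn A 4 ![a, b, c, d] := by
  have hab' : a ≠ b := fun h => hmt.irrefl a (h ▸ hab)
  have hbc' : b ≠ c := fun h => hmt.irrefl b (h ▸ hbc)
  have hcd' : c ≠ d := fun h => hmt.irrefl c (h ▸ hcd)
  have hda' : d ≠ a := fun h => hmt.irrefl d (h ▸ hda)
  have hac : a ≠ c := fun h => hmt.asymm a b hab (h ▸ hbc)
  have hbd : b ≠ d := fun h => hmt.asymm b c hbc (h ▸ hcd)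
  refine ⟨by norm_num, fun i j h => ?_, fun i => ?_⟩
  · fin_cases i <;> fin_cases j <;> first | rfl | simp_all [eq_comm]
  · fin_cases i <;> simpa

theorem card_filter_adj_le_two [DecidableEq V] [DecidableRel A]
    (hmt : IsMultipartiteTournament A p) {T : Finset V} {v x y : V}
    (hT : ∀ w ∈ T, w = x ∨ w = y ∨ p w = p v) : #(T.filter (A v)) ≤ 2 := by
  refine (card_le_card (t := {x, y}) fun w hw => ?_).trans card_le_two
  obtain ⟨hwT, hvw⟩ := mem_filter.1 hw
  rcases hT w hwT with rfl | rfl | hpw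
  · exact mem_insert_self _ _
  · exact mem_insert_of_mem (mem_singleton_self _)
  · exact absurd hvw (hmt.not_adj_same v w hpw.symm)

end IsMultipartiteTournament

def HasDisjointCyclesIn (A : V → V → Prop) (S : Finset V) (k : ℕ) : Prop :=
  ∃ (m : Fin k → ℕ) (c : ∀ i, ZMod (m i) → V), DisjointCycles A k m c ∧ ∀ i t, c i t ∈ S

namespace HasDisjointCyclesIn

variable {S : Finset V} {k : ℕ}

theorem zero : HasDisjointCyclesIn A S 0 :=
  ⟨Fin.elim0, fun i => i.elim0, ⟨fun i => i.elim0, fun i => i.elim0⟩, fun i => i.elim0⟩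

theorem hasKDisjointCycles (h : HasDisjointCyclesIn A S k) : HasKDisjointCycles A k :=
  let ⟨m, c, hc, _⟩ := h
  ⟨m, c, hc⟩

theorem cons {R : Finset V} (h : HasDisjointCyclesIn A R k) (hRS : R ⊆ S) {m₀ : ℕ}
    {c₀ : ZMod m₀ → V} (h₀ : IsCycleOn A m₀ c₀) (hc₀S : ∀ t, c₀ t ∈ S)
    (hc₀R : ∀ t, c₀ t ∉ R) : HasDisjointCyclesIn A S (k + 1) := by
  obtain ⟨m, c, ⟨hcyc, hdisj⟩, hcR⟩ := h
  have hdisj₀ : ∀ i, Disjoint (Set.range c₀) (Set.range (c i)) := fun i =>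
    Set.disjoint_left.2 <| by
      rintro _ ⟨t, rfl⟩ ⟨s, hs⟩
      exact hc₀R t (hs ▸ hcR i s)
  refine ⟨Fin.cons m₀ m, Fin.cons c₀ c, ⟨Fin.cases h₀ hcyc, fun i j hij => ?_⟩,
    Fin.cases hc₀S fun i t => hRS (hcR i t)⟩
  induction i using Fin.cases <;> induction j using Fin.cases
  · exact absurd rfl hij
  · exact hdisj₀ _
  · exact (hdisj₀ _).symm
  · exact hdisj _ _ fun h => hij (congrArg Fin.succ h)

end HasDisjointCyclesIn

def IsOutClosed (A : V → V → Prop) (S C : Finset V) : Prop :=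
  C ⊆ S ∧ ∀ v ∈ C, ∀ w ∈ S, A v w → w ∈ C

def IsTerminalComponent (A : V → V → Prop) (S C : Finset V) : Prop :=
  Minimal (fun D => D.Nonempty ∧ IsOutClosed A S D) C

theorem exists_isTerminalComponent {S : Finset V} (hS : S.Nonempty) :
    ∃ C, IsTerminalComponent A S C :=
  exists_minimal_of_wellFoundedLT _ ⟨S, hS, subset_rfl, fun _ _ _ hw _ => hw⟩

namespace IsTerminalComponent

variable {S C : Finset V}

theorem forall_of_forward (hC : IsTerminalComponent A S C) {P : V → Prop} {v₀ : V}
    (hv₀ : v₀ ∈ C) (hP₀ : P v₀) (hstep : ∀ v ∈ C, ∀ w ∈ C, A v w → P v → P w) :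
    ∀ v ∈ C, P v := by
  classical
  have hclosed : IsOutClosed A S (C.filter P) := by
    refine ⟨(filter_subset _ _).trans hC.1.2.1, fun v hv w hw hvw => ?_⟩
    obtain ⟨hvC, hPv⟩ := mem_filter.1 hv
    have hwC := hC.1.2.2 v hvC w hw hvw
    exact mem_filter.2 ⟨hwC, hstep v hvC w hwC hvw hPv⟩
  have hsub := hC.2 ⟨⟨v₀, mem_filter.2 ⟨hv₀, hP₀⟩⟩, hclosed⟩ (filter_subset _ _)
  exact fun v hv => (mem_filter.1 (hsub hv)).2

theorem forall_of_backward (hC : IsTerminalComponent A S C) {P : V → Prop} {v₀ : V}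
    (hv₀ : v₀ ∈ C) (hP₀ : P v₀) (hstep : ∀ v ∈ C, ∀ w ∈ C, A v w → P w → P v) :
    ∀ v ∈ C, P v := by
  by_contra! ⟨v, hv, hPv⟩
  exact hC.forall_of_forward (P := fun u => ¬ P u) hv hPv
    (fun u hu w hw huw hu' hw' => hu' (hstep u hu w hw huw hw')) v₀ hv₀ hP₀

end IsTerminalComponent

def TriangleFreeOn (A : V → V → Prop) (C : Finset V) : Prop :=
  ∀ a ∈ C, ∀ b ∈ C, ∀ c ∈ C, A a b → A b c → ¬ A c a

namespace TriangleFreeOn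

variable {C : Finset V}

protected theorem swap (htf : TriangleFreeOn A C) : TriangleFreeOn (swap A) C :=
  fun a ha b hb c hc hab hbc hca => htf a ha c hc b hb hca hbc hab

theorem adj_trans (htf : TriangleFreeOn A C) (hmt : IsMultipartiteTournament A p) {a b c : V}
    (ha : a ∈ C) (hb : b ∈ C) (hc : c ∈ C) (hab : A a b) (hbc : A b c) (hac : p a ≠ p c) :
    A a c :=
  hmt.adj_of_not_adj hac (htf a ha b hb c hc hab hbc)

theorem parts_eq_of_four_cycle (htf : TriangleFreeOn A C) (hmt : IsMultipartiteTournament A p)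
    {a b c d : V} (ha : a ∈ C) (hb : b ∈ C) (hc : c ∈ C) (hd : d ∈ C) (hab : A a b)
    (hbc : A b c) (hcd : A c d) (hda : A d a) : p a = p c ∧ p b = p d := by
  constructor
  · by_contra hac
    exact htf a ha c hc d hd (htf.adj_trans hmt ha hb hc hab hbc hac) hcd hda
  · by_contra hbd
    exact htf b hb d hd a ha (htf.adj_trans hmt hb hc hd hbc hcd hbd) hda hab

end TriangleFreeOn

theorem IsTerminalComponent.exists_four_cycle [DecidableRel A] {S C : Finset V}
    (hC : IsTerminalComponent A S C) (htf : TriangleFreeOn A C)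
    (hmt : IsMultipartiteTournament A p) (hout : ∀ v ∈ S, ∃ w ∈ S, A v w) :
    ∃ a ∈ C, ∃ b ∈ C, ∃ c ∈ C, ∃ d ∈ C, A a b ∧ A b c ∧ A c d ∧ A d a := by
  obtain ⟨x, hx, hmin⟩ := C.exists_min_image (fun v => #(C.filter (A v))) hC.1.1
  -- Otherwise the out-neighbourhood of `x` would be a smaller out-closed set.
  obtain ⟨y, hy, x', hx', hyx', hpx'⟩ :
      ∃ y ∈ C.filter (A x), ∃ x' ∈ C, A y x' ∧ p x' = p x := by
    by_contra! hnot
    have hclosed : IsOutClosed A S (C.filter (A x)) := by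
      refine ⟨(filter_subset _ _).trans hC.1.2.1, fun y hy w hw hyw => ?_⟩
      have hwC := hC.1.2.2 y (mem_filter.1 hy).1 w hw hyw
      exact mem_filter.2 ⟨hwC, htf.adj_trans hmt hx (mem_filter.1 hy).1 hwC (mem_filter.1 hy).2
        hyw (hnot y hy w hwC hyw).symm⟩
    obtain ⟨w, hw, hxw⟩ := hout x (hC.1.2.1 hx)
    have hne : (C.filter (A x)).Nonempty := ⟨w, mem_filter.2 ⟨hC.1.2.2 x hx w hw hxw, hxw⟩⟩
    exact hmt.irrefl x (mem_filter.1 (hC.2 ⟨hne, hclosed⟩ (filter_subset _ _) hx)).2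
  obtain ⟨z, hz, hxz⟩ : ∃ z ∈ C.filter (A x'), z ∉ C.filter (A x) := by
    by_contra! hsub
    have hlt : C.filter (A x') ⊂ C.filter (A x) :=
      (ssubset_iff_of_subset hsub).2 ⟨y, hy, fun h => hmt.asymm _ _ hyx' (mem_filter.1 h).2⟩
    exact (card_lt_card hlt).not_ge (hmin x' hx')
  obtain ⟨hzC, hx'z⟩ := mem_filter.1 hz
  have hzx : A z x := hmt.adj_of_not_adj (hpx' ▸ (hmt.ne_of_adj hx'z).symm)
    fun h => hxz (mem_filter.2 ⟨hzC, h⟩)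
  exact ⟨x, hx, y, (mem_filter.1 hy).1, x', hx', z, hzC, (mem_filter.1 hy).2, hyx', hx'z, hzx⟩

/-- Holds at `a` and is preserved along arcs inside a triangle-free `C`, so no vertex of part `γ`
that dominates `a` is reachable from `a`. -/
def BondyInvariant (A : V → V → Prop) (p : V → ι) (C : Finset V) (a b : V) (γ : ι) (w : V) :
    Prop :=
  (p w = γ → A a w ∧ A b w) ∧ (p w ≠ γ → ∀ z ∈ C, p z = γ → A z a → A z w)

theorem TriangleFreeOn.bondyInvariant_of_adj {C : Finset V} (htf : TriangleFreeOn A C)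
    (hmt : IsMultipartiteTournament A p) {a b : V} (ha : a ∈ C) (hb : b ∈ C) (hab : A a b)
    {γ : ι} (hγa : γ ≠ p a) (hγb : γ ≠ p b) (hback : ∀ z ∈ C, p z = γ → A z b → A z a)
    {w w' : V} (hw : w ∈ C) (hw' : w' ∈ C) (hww' : A w w') (h : BondyInvariant A p C a b γ w) :
    BondyInvariant A p C a b γ w' := by
  obtain ⟨hwγ_dom, hwγ_ne⟩ := h
  have hpww' := hmt.ne_of_adj hww'
  refine ⟨fun hw'γ => ?_, fun hw'γ z hz hzγ hza => ?_⟩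
  · subst hw'γ
    have hw'a : ¬ A w' a := fun h => hmt.asymm _ _ hww' (hwγ_ne hpww' w' hw' rfl h)
    exact ⟨hmt.adj_of_not_adj hγa.symm hw'a,
      hmt.adj_of_not_adj hγb.symm fun h => hw'a (hback w' hw' rfl h)⟩
  have hzw' : p z ≠ p w' := fun h => hw'γ (h ▸ hzγ)
  by_cases hwγ : p w = γ
  · -- Route through an endpoint `s ∈ {a, b}` outside the part of `w'`.
    obtain ⟨haw, hbw⟩ := hwγ_dom hwγ
    have hvia : ∀ s ∈ C, A s w → A z s → p s ≠ p w' → A z w' := fun s hs hsw hzs hsw' =>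
      htf.adj_trans hmt hz hs hw' hzs (htf.adj_trans hmt hs hw hw' hsw hww' hsw') hzw'
    by_cases haw' : p a = p w'
    · exact hvia b hb hbw (htf.adj_trans hmt hz ha hb hza hab (hzγ ▸ hγb))
        fun h => hmt.ne_of_adj hab (haw'.trans h.symm)
    · exact hvia a ha haw hza haw'
  · exact htf.adj_trans hmt hz hw hw' (hwγ_ne hwγ z hz hzγ hza) hww' hzw'

theorem IsTerminalComponent.parts_of_four_cycle {S C : Finset V}
    (hC : IsTerminalComponent A S C) (htf : TriangleFreeOn A C)
    (hmt : IsMultipartiteTournament A p) {a b c d : V} (ha : a ∈ C) (hb : b ∈ C) (hc : c ∈ C)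
    (hd : d ∈ C) (hab : A a b) (hbc : A b c) (hcd : A c d) (hda : A d a) :
    ∀ v ∈ C, p v = p a ∨ p v = p b := by
  obtain ⟨hac, hbd⟩ := htf.parts_eq_of_four_cycle hmt ha hb hc hd hab hbc hcd hda
  intro v hv
  by_contra! ⟨hva, hvb⟩
  have hback : ∀ z ∈ C, p z = p v → A z b → A z a := fun z hz hzv hzb =>
    have hzc := htf.adj_trans hmt hz hb hc hzb hbc (hzv ▸ hac ▸ hva)
    have hzd := htf.adj_trans hmt hz hc hd hzc hcd (hzv ▸ hbd ▸ hvb)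
    htf.adj_trans hmt hz hd ha hzd hda (hzv ▸ hva)
  -- `v` dominates the 4-cycle, so is unreachable from it, or is dominated by it, so cannot
  -- reach it.
  by_cases hv_a : A v a
  · have hinv := hC.forall_of_forward (P := BondyInvariant A p C a b (p v)) ha
      ⟨fun h => absurd h.symm hva, fun _ _ _ _ h => h⟩
      (fun w hw w' hw' => htf.bondyInvariant_of_adj hmt ha hb hab hva hvb hback hw hw')
      v hv
    exact hmt.asymm _ _ hv_a (hinv.1 rfl).1
  · have hback' : ∀ z ∈ C, p z = p v → A a z → A b z := fun z hz hzv haz =>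
      hmt.adj_of_not_adj (hzv ▸ hvb).symm fun hzb => hmt.asymm _ _ haz (hback z hz hzv hzb)
    have hinv := hC.forall_of_backward (P := BondyInvariant (swap A) p C b a (p v)) hb
      ⟨fun h => absurd h.symm hvb, fun _ _ _ _ h => h⟩
      (fun w hw w' hw' hww' => htf.swap.bondyInvariant_of_adj hmt.swap hb ha hab hvb
        hva hback' hw' hw hww')
      v hv
    exact hv_a (hinv.1 rfl).2

def IsLightCycle (A : V → V → Prop) [DecidableRel A] (C T : Finset V) : Prop :=
  T ⊆ C ∧ (∃ m c, IsCycleOn A m c ∧ ∀ t, c t ∈ T) ∧ ∀ v ∈ C, #(T.filter (A v)) ≤ 2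

theorem fin_three_eq_or_eq_or_eq :
    ∀ a b c t : Fin 3, a ≠ b → b ≠ c → c ≠ a → t = a ∨ t = b ∨ t = c := by
  decide

section LightCycle

variable [DecidableEq V] [DecidableRel A] {C : Finset V}

theorem isLightCycle_three {p : V → Fin 3} (hmt : IsMultipartiteTournament A p) {a b c : V}
    (ha : a ∈ C) (hb : b ∈ C) (hc : c ∈ C) (hab : A a b) (hbc : A b c) (hca : A c a) :
    IsLightCycle A C {a, b, c} := by
  refine ⟨by simp [insert_subset_iff, *], ⟨3, _, hmt.isCycleOn_three hab hbc hca, fun t => ?_⟩,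
    fun v _ => ?_⟩
  · fin_cases t <;> simp
  · rcases fin_three_eq_or_eq_or_eq _ _ _ (p v) (hmt.ne_of_adj hab) (hmt.ne_of_adj hbc)
      (hmt.ne_of_adj hca) with h | h | h
    · exact hmt.card_filter_adj_le_two (x := b) (y := c) (by simp [h])
    · exact hmt.card_filter_adj_le_two (x := a) (y := c) (by simp [h])
    · exact hmt.card_filter_adj_le_two (x := a) (y := b) (by simp [h])

theorem isLightCycle_four (hmt : IsMultipartiteTournament A p) {a b c d : V} (ha : a ∈ C)
    (hb : b ∈ C) (hc : c ∈ C) (hd : d ∈ C) (hab : A a b) (hbc : A b c) (hcd : A c d)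
    (hda : A d a) (hac : p a = p c) (hbd : p b = p d) (hC : ∀ v ∈ C, p v = p a ∨ p v = p b) :
    IsLightCycle A C {a, b, c, d} := by
  refine ⟨by simp [insert_subset_iff, *], ⟨4, _, hmt.isCycleOn_four hab hbc hcd hda, fun t => ?_⟩,
    fun v hv => ?_⟩
  · fin_cases t <;> simp
  · rcases hC v hv with h | h
    · exact hmt.card_filter_adj_le_two (x := b) (y := d) (by simp [h, hac])
    · exact hmt.card_filter_adj_le_two (x := a) (y := c) (by simp [h, hbd])

theorem exists_isLightCycle {p : V → Fin 3} (hmt : IsMultipartiteTournament A p) {S : Finset V}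
    (hS : S.Nonempty) (hout : ∀ v ∈ S, ∃ w ∈ S, A v w) :
    ∃ C T, IsOutClosed A S C ∧ IsLightCycle A C T := by
  obtain ⟨C, hC⟩ := exists_isTerminalComponent (A := A) hS
  by_cases htf : TriangleFreeOn A C
  · obtain ⟨a, ha, b, hb, c, hc, d, hd, hab, hbc, hcd, hda⟩ := hC.exists_four_cycle htf hmt hout
    obtain ⟨hac, hbd⟩ := htf.parts_eq_of_four_cycle hmt ha hb hc hd hab hbc hcd hda
    exact ⟨C, _, hC.1.2, isLightCycle_four hmt ha hb hc hd hab hbc hcd hda hac hbd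
      (hC.parts_of_four_cycle htf hmt ha hb hc hd hab hbc hcd hda)⟩
  · simp only [TriangleFreeOn, not_forall, not_not] at htf
    obtain ⟨a, ha, b, hb, c, hc, hab, hbc, hca⟩ := htf
    exact ⟨C, _, hC.1.2, isLightCycle_three hmt ha hb hc hab hbc hca⟩

theorem IsLightCycle.card_filter_le {S T : Finset V} (hT : IsLightCycle A C T)
    (hC : IsOutClosed A S C) {v : V} (hv : v ∈ C) :
    #(S.filter (A v)) ≤ #((C \ T).filter (A v)) + 2 :=
  calc #(S.filter (A v))
      ≤ #((C \ T).filter (A v) ∪ T.filter (A v)) := card_le_card fun w hw => by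
        obtain ⟨hwS, hvw⟩ := mem_filter.1 hw
        have hwC := hC.2 v hv w hwS hvw
        by_cases hwT : w ∈ T <;> simp [hwC, hwT, hvw]
    _ ≤ #((C \ T).filter (A v)) + #(T.filter (A v)) := card_union_le _ _
    _ ≤ #((C \ T).filter (A v)) + 2 := by grw [hT.2.2 v hv]

theorem hasDisjointCyclesIn_of_le_card_filter {p : V → Fin 3}
    (hmt : IsMultipartiteTournament A p) (k : ℕ) :
    ∀ S : Finset V, (0 < k → S.Nonempty) → (∀ v ∈ S, 2 * k - 1 ≤ #(S.filter (A v))) →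
      HasDisjointCyclesIn A S k := by
  induction k with
  | zero => exact fun _ _ _ => .zero
  | succ k ih =>
    intro S hS hdeg
    obtain ⟨C, T, hC, hT⟩ := exists_isLightCycle hmt (hS k.succ_pos) fun v hv => by
      have hpos : 0 < #(S.filter (A v)) := by have := hdeg v hv; omega
      obtain ⟨w, hw⟩ := card_pos.1 hpos
      exact ⟨w, mem_filter.1 hw⟩
    obtain ⟨m, c, hc, hcT⟩ := hT.2.1
    have hdeg' : ∀ v ∈ C, 2 * k + 1 ≤ #((C \ T).filter (A v)) + 2 := fun v hv =>
      (hdeg v (hC.1 hv)).trans (hT.card_filter_le hC hv)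
    refine .cons (ih _ (fun hk => ?_) fun v hv => ?_) (sdiff_subset.trans hC.1) hc
      (fun t => hC.1 (hT.1 (hcT t))) fun t ht => (mem_sdiff.1 ht).2 (hcT t)
    · have := hdeg' (c 0) (hT.1 (hcT 0))
      have hpos : 0 < #((C \ T).filter (A (c 0))) := by omega
      exact (card_pos.1 hpos).mono (filter_subset _ _)
    · have := hdeg' v (mem_sdiff.1 hv).1
      omega

end LightCycle

end

/-- Every 3-partite tournament with minimum out-degree at least `2k-1` contains
`k` vertex-disjoint directed cycles. -/
theorem stmt_3 {V : Type*} [Fintype V] (A : V → V → Prop) (p : V → Fin 3)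
    (hp : Function.Surjective p) (k : ℕ)
    (hmt : IsMultipartiteTournament A p)
    (hδ : MinOutDegreeAtLeast A (2 * k - 1)) :
    HasKDisjointCycles A k := by
  classical
  have : Nonempty V := hp.nonempty
  have hdeg : ∀ v ∈ (univ : Finset V), 2 * k - 1 ≤ #(univ.filter (A v)) := fun v _ => by
    simpa [Nat.card_eq_fintype_card, Fintype.card_subtype] using hδ v
  exact (hasDisjointCyclesIn_of_le_card_filter hmt k univ (fun _ => univ_nonempty)
    hdeg).hasKDisjointCycles
end

section
/- In a multipartite tournament D with sink set S, every vertex in V(D) \ S can reach every vertex of S by a directed path of length at most two. -/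
/-- In a multipartite tournament with sink set `S`, every vertex outside `S` can reach
every vertex of `S` by a directed path of length at most two. -/
theorem stmt_6 {V ι : Type*} (A : V → V → Prop) (p : V → ι)
    (hmt : IsMultipartiteTournament A p)
    (v s : V) (hv : ∃ w, A v w) (hs : ∀ w, ¬ A s w) :
    A v s ∨ ∃ u, A v u ∧ A u s := by
  by_cases h : p v = p s
  · obtain ⟨w, hw⟩ := hv
    have hwv : p v ≠ p w := fun he => hmt.not_adj_same v w he hw
    have hws : p w ≠ p s := fun he => hwv (h.trans he.symm)
    rcases hmt.total w s hws with h1 | h1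
    · exact Or.inr ⟨w, hw, h1⟩
    · exact absurd h1 (hs w)
  · rcases hmt.total v s h with h1 | h1
    · exact Or.inl h1
    · exact absurd h1 (hs v)
end

section
/- Let D be a multipartite tournament and let C, C' be two vertex-disjoint directed 3-cycles in D. If there is at least one arc from V(C) to V(C') and at least one arc from V(C') to V(C), then the subdigraph induced by V(C) ∪ V(C') contains a directed cycle of length at least 4. -/
section Aux

variable {V : Type*} (A : V → V → Prop)

private lemma cyc4 (v0 v1 v2 v3 : V)
    (h01 : A v0 v1) (h12 : A v1 v2) (h23 : A v2 v3) (h30 : A v3 v0)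
    (d01 : v0 ≠ v1) (d02 : v0 ≠ v2) (d03 : v0 ≠ v3)
    (d12 : v1 ≠ v2) (d13 : v1 ≠ v3) (d23 : v2 ≠ v3) :
    ∃ d : ZMod 4 → V, IsCycleOn A 4 d ∧
      ∀ i, d i = v0 ∨ d i = v1 ∨ d i = v2 ∨ d i = v3 := by
  refine ⟨fun i : ZMod 4 => [v0,v1,v2,v3].getD i.val v0, ⟨by norm_num, ?_, ?_⟩, ?_⟩
  · intro a b hab
    fin_cases a <;> fin_cases b <;>
      first
        | rfl
        | exact absurd hab d01 | exact absurd hab d01.symm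
        | exact absurd hab d02 | exact absurd hab d02.symm
        | exact absurd hab d03 | exact absurd hab d03.symm
        | exact absurd hab d12 | exact absurd hab d12.symm
        | exact absurd hab d13 | exact absurd hab d13.symm
        | exact absurd hab d23 | exact absurd hab d23.symm
  · intro i; fin_cases i
    exacts [h01, h12, h23, h30]
  · intro i; fin_cases i
    exacts [Or.inl rfl, Or.inr (Or.inl rfl), Or.inr (Or.inr (Or.inl rfl)),
      Or.inr (Or.inr (Or.inr rfl))]

private lemma cyc5 (v0 v1 v2 v3 v4 : V)
    (h01 : A v0 v1) (h12 : A v1 v2) (h23 : A v2 v3) (h34 : A v3 v4) (h40 : A v4 v0)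
    (d01 : v0 ≠ v1) (d02 : v0 ≠ v2) (d03 : v0 ≠ v3) (d04 : v0 ≠ v4)
    (d12 : v1 ≠ v2) (d13 : v1 ≠ v3) (d14 : v1 ≠ v4)
    (d23 : v2 ≠ v3) (d24 : v2 ≠ v4) (d34 : v3 ≠ v4) :
    ∃ d : ZMod 5 → V, IsCycleOn A 5 d ∧
      ∀ i, d i = v0 ∨ d i = v1 ∨ d i = v2 ∨ d i = v3 ∨ d i = v4 := by
  refine ⟨fun i : ZMod 5 => [v0,v1,v2,v3,v4].getD i.val v0, ⟨by norm_num, ?_, ?_⟩, ?_⟩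
  · intro a b hab
    fin_cases a <;> fin_cases b <;>
      first
        | rfl
        | exact absurd hab d01 | exact absurd hab d01.symm
        | exact absurd hab d02 | exact absurd hab d02.symm
        | exact absurd hab d03 | exact absurd hab d03.symm
        | exact absurd hab d04 | exact absurd hab d04.symm
        | exact absurd hab d12 | exact absurd hab d12.symm
        | exact absurd hab d13 | exact absurd hab d13.symm
        | exact absurd hab d14 | exact absurd hab d14.symm
        | exact absurd hab d23 | exact absurd hab d23.symm
        | exact absurd hab d24 | exact absurd hab d24.symm
        | exact absurd hab d34 | exact absurd hab d34.symm
  · intro i; fin_cases i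
    exacts [h01, h12, h23, h34, h40]
  · intro i; fin_cases i
    exacts [Or.inl rfl, Or.inr (Or.inl rfl), Or.inr (Or.inr (Or.inl rfl)),
      Or.inr (Or.inr (Or.inr (Or.inl rfl))), Or.inr (Or.inr (Or.inr (Or.inr rfl)))]

private lemma cyc6 (v0 v1 v2 v3 v4 v5 : V)
    (h01 : A v0 v1) (h12 : A v1 v2) (h23 : A v2 v3) (h34 : A v3 v4) (h45 : A v4 v5)
    (h50 : A v5 v0)
    (d01 : v0 ≠ v1) (d02 : v0 ≠ v2) (d03 : v0 ≠ v3) (d04 : v0 ≠ v4) (d05 : v0 ≠ v5)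
    (d12 : v1 ≠ v2) (d13 : v1 ≠ v3) (d14 : v1 ≠ v4) (d15 : v1 ≠ v5)
    (d23 : v2 ≠ v3) (d24 : v2 ≠ v4) (d25 : v2 ≠ v5)
    (d34 : v3 ≠ v4) (d35 : v3 ≠ v5) (d45 : v4 ≠ v5) :
    ∃ d : ZMod 6 → V, IsCycleOn A 6 d ∧
      ∀ i, d i = v0 ∨ d i = v1 ∨ d i = v2 ∨ d i = v3 ∨ d i = v4 ∨ d i = v5 := by
  refine ⟨fun i : ZMod 6 => [v0,v1,v2,v3,v4,v5].getD i.val v0, ⟨by norm_num, ?_, ?_⟩, ?_⟩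
  · intro a b hab
    fin_cases a <;> fin_cases b <;>
      first
        | rfl
        | exact absurd hab d01 | exact absurd hab d01.symm
        | exact absurd hab d02 | exact absurd hab d02.symm
        | exact absurd hab d03 | exact absurd hab d03.symm
        | exact absurd hab d04 | exact absurd hab d04.symm
        | exact absurd hab d05 | exact absurd hab d05.symm
        | exact absurd hab d12 | exact absurd hab d12.symm
        | exact absurd hab d13 | exact absurd hab d13.symm
        | exact absurd hab d14 | exact absurd hab d14.symm
        | exact absurd hab d15 | exact absurd hab d15.symm
        | exact absurd hab d23 | exact absurd hab d23.symm
        | exact absurd hab d24 | exact absurd hab d24.symm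
        | exact absurd hab d25 | exact absurd hab d25.symm
        | exact absurd hab d34 | exact absurd hab d34.symm
        | exact absurd hab d35 | exact absurd hab d35.symm
        | exact absurd hab d45 | exact absurd hab d45.symm
  · intro i; fin_cases i
    exacts [h01, h12, h23, h34, h45, h50]
  · intro i; fin_cases i
    exacts [Or.inl rfl, Or.inr (Or.inl rfl), Or.inr (Or.inr (Or.inl rfl)),
      Or.inr (Or.inr (Or.inr (Or.inl rfl))),
      Or.inr (Or.inr (Or.inr (Or.inr (Or.inl rfl)))),
      Or.inr (Or.inr (Or.inr (Or.inr (Or.inr rfl))))]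

/-- If there are crossing arcs `c i → c' j` and `c' k → c l` whose "gap sum"
is at least `2`, we can build a cycle of length at least 4 in the union. -/
private lemma bridge (c c' : ZMod 3 → V) (hc : IsCycleOn A 3 c) (hc' : IsCycleOn A 3 c')
    (hdisj : Disjoint (Set.range c) (Set.range c'))
    {i j k l : ZMod 3} (hout : A (c i) (c' j)) (hin : A (c' k) (c l))
    (hst : 2 ≤ (i - l).val + (k - j).val) :
    ∃ (m : ℕ) (d : ZMod m → V), 4 ≤ m ∧ IsCycleOn A m d ∧
      Set.range d ⊆ Set.range c ∪ Set.range c' := by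
  have cne : ∀ a b : ZMod 3, a ≠ b → c a ≠ c b := fun a b h h2 => h (hc.2.1 h2)
  have c'ne : ∀ a b : ZMod 3, a ≠ b → c' a ≠ c' b := fun a b h h2 => h (hc'.2.1 h2)
  have xne : ∀ a b : ZMod 3, c a ≠ c' b := fun a b h =>
    Set.disjoint_left.mp hdisj ⟨a, rfl⟩ ⟨b, h.symm⟩
  have harc := hc.2.2
  have harc' := hc'.2.2
  have tri : ∀ x : ZMod 3, x = 0 ∨ x = 1 ∨ x = 2 := by decide
  have z01 : ∀ a : ZMod 3, a ≠ a + 1 := by decide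
  have z02 : ∀ a : ZMod 3, a ≠ a + 2 := by decide
  have z12 : ∀ a : ZMod 3, a + 1 ≠ a + 2 := by decide
  have sub0 : ∀ a b : ZMod 3, a - b = 0 → a = b := by decide
  have sub1 : ∀ a b : ZMod 3, a - b = 1 → a = b + 1 := by decide
  have sub2 : ∀ a b : ZMod 3, a - b = 2 → a = b + 2 := by decide
  have hplus : ∀ a : ZMod 3, a + 1 + 1 = a + 2 := by decide
  rcases tri (i - l) with hs | hs | hs <;> rcases tri (k - j) with ht | ht | ht
  · rw [hs, ht] at hst; exact absurd hst (by decide)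
  · rw [hs, ht] at hst; exact absurd hst (by decide)
  · -- s = 0, t = 2 : length 4 cycle  c l → c' j → c' (j+1) → c' (j+2) → c l
    have hi : i = l := sub0 _ _ hs
    have hk : k = j + 2 := sub2 _ _ ht
    subst hi; subst hk
    obtain ⟨d, hd, hmem⟩ := cyc4 A (c i) (c' j) (c' (j + 1)) (c' (j + 2))
      hout (harc' j) (by have := harc' (j + 1); rwa [hplus] at this) hin
      (xne _ _) (xne _ _) (xne _ _) (c'ne _ _ (z01 j)) (c'ne _ _ (z02 j)) (c'ne _ _ (z12 j))
    refine ⟨4, d, le_refl 4, hd, ?_⟩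
    rintro x ⟨a, rfl⟩
    rcases hmem a with h | h | h | h <;> rw [h]
    exacts [Or.inl ⟨_, rfl⟩, Or.inr ⟨_, rfl⟩, Or.inr ⟨_, rfl⟩, Or.inr ⟨_, rfl⟩]
  ·
    rw [hs, ht] at hst; exact absurd hst (by decide)
  · -- s = 1, t = 1 : length 4 cycle  c l → c (l+1) → c' j → c' (j+1) → c l
    have hi : i = l + 1 := sub1 _ _ hs
    have hk : k = j + 1 := sub1 _ _ ht
    subst hi; subst hk
    obtain ⟨d, hd, hmem⟩ := cyc4 A (c l) (c (l + 1)) (c' j) (c' (j + 1))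
      (harc l) hout (harc' j) hin
      (cne _ _ (z01 l)) (xne _ _) (xne _ _) (xne _ _) (xne _ _) (c'ne _ _ (z01 j))
    refine ⟨4, d, le_refl 4, hd, ?_⟩
    rintro x ⟨a, rfl⟩
    rcases hmem a with h | h | h | h <;> rw [h]
    exacts [Or.inl ⟨_, rfl⟩, Or.inl ⟨_, rfl⟩, Or.inr ⟨_, rfl⟩, Or.inr ⟨_, rfl⟩]
  · -- s = 1, t = 2 : length 5 cycle  c l → c (l+1) → c' j → c' (j+1) → c' (j+2) → c l
    have hi : i = l + 1 := sub1 _ _ hs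
    have hk : k = j + 2 := sub2 _ _ ht
    subst hi; subst hk
    obtain ⟨d, hd, hmem⟩ := cyc5 A (c l) (c (l + 1)) (c' j) (c' (j + 1)) (c' (j + 2))
      (harc l) hout (harc' j) (by have := harc' (j + 1); rwa [hplus] at this) hin
      (cne _ _ (z01 l)) (xne _ _) (xne _ _) (xne _ _) (xne _ _) (xne _ _) (xne _ _)
      (c'ne _ _ (z01 j)) (c'ne _ _ (z02 j)) (c'ne _ _ (z12 j))
    refine ⟨5, d, by norm_num, hd, ?_⟩
    rintro x ⟨a, rfl⟩
    rcases hmem a with h | h | h | h | h <;> rw [h]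
    exacts [Or.inl ⟨_, rfl⟩, Or.inl ⟨_, rfl⟩, Or.inr ⟨_, rfl⟩, Or.inr ⟨_, rfl⟩,
      Or.inr ⟨_, rfl⟩]
  · -- s = 2, t = 0 : length 4 cycle  c' j → c l → c (l+1) → c (l+2) → c' j
    have hi : i = l + 2 := sub2 _ _ hs
    have hk : k = j := sub0 _ _ ht
    subst hi; rw [hk] at hin
    obtain ⟨d, hd, hmem⟩ := cyc4 A (c' j) (c l) (c (l + 1)) (c (l + 2))
      hin (harc l) (by have := harc (l + 1); rwa [hplus] at this) hout
      (xne _ _).symm (xne _ _).symm (xne _ _).symm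
      (cne _ _ (z01 l)) (cne _ _ (z02 l)) (cne _ _ (z12 l))
    refine ⟨4, d, le_refl 4, hd, ?_⟩
    rintro x ⟨a, rfl⟩
    rcases hmem a with h | h | h | h <;> rw [h]
    exacts [Or.inr ⟨_, rfl⟩, Or.inl ⟨_, rfl⟩, Or.inl ⟨_, rfl⟩, Or.inl ⟨_, rfl⟩]
  · -- s = 2, t = 1 : length 5 cycle  c l → c (l+1) → c (l+2) → c' j → c' (j+1) → c l
    have hi : i = l + 2 := sub2 _ _ hs
    have hk : k = j + 1 := sub1 _ _ ht
    subst hi; subst hk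
    obtain ⟨d, hd, hmem⟩ := cyc5 A (c l) (c (l + 1)) (c (l + 2)) (c' j) (c' (j + 1))
      (harc l) (by have := harc (l + 1); rwa [hplus] at this) hout (harc' j) hin
      (cne _ _ (z01 l)) (cne _ _ (z02 l)) (xne _ _) (xne _ _)
      (cne _ _ (z12 l)) (xne _ _) (xne _ _) (xne _ _) (xne _ _) (c'ne _ _ (z01 j))
    refine ⟨5, d, by norm_num, hd, ?_⟩
    rintro x ⟨a, rfl⟩
    rcases hmem a with h | h | h | h | h <;> rw [h]
    exacts [Or.inl ⟨_, rfl⟩, Or.inl ⟨_, rfl⟩, Or.inl ⟨_, rfl⟩, Or.inr ⟨_, rfl⟩,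
      Or.inr ⟨_, rfl⟩]
  · -- s = 2, t = 2 : length 6 cycle
    have hi : i = l + 2 := sub2 _ _ hs
    have hk : k = j + 2 := sub2 _ _ ht
    subst hi; subst hk
    obtain ⟨d, hd, hmem⟩ := cyc6 A (c l) (c (l + 1)) (c (l + 2)) (c' j) (c' (j + 1))
      (c' (j + 2))
      (harc l) (by have := harc (l + 1); rwa [hplus] at this) hout (harc' j)
      (by have := harc' (j + 1); rwa [hplus] at this) hin
      (cne _ _ (z01 l)) (cne _ _ (z02 l)) (xne _ _) (xne _ _) (xne _ _)
      (cne _ _ (z12 l)) (xne _ _) (xne _ _) (xne _ _)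
      (xne _ _) (xne _ _) (xne _ _)
      (c'ne _ _ (z01 j)) (c'ne _ _ (z02 j)) (c'ne _ _ (z12 j))
    refine ⟨6, d, by norm_num, hd, ?_⟩
    rintro x ⟨a, rfl⟩
    rcases hmem a with h | h | h | h | h | h <;> rw [h]
    exacts [Or.inl ⟨_, rfl⟩, Or.inl ⟨_, rfl⟩, Or.inl ⟨_, rfl⟩, Or.inr ⟨_, rfl⟩,
      Or.inr ⟨_, rfl⟩, Or.inr ⟨_, rfl⟩]

end Aux

/-- If `C`, `C'` are two vertex-disjoint directed 3-cycles in a multipartite tournament with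
at least one arc in each direction between them, then the subdigraph induced by
`V(C) ∪ V(C')` contains a directed cycle of length at least 4. -/
theorem stmt_7 {V ι : Type*} (A : V → V → Prop) (p : V → ι)
    (hmt : IsMultipartiteTournament A p)
    (c c' : ZMod 3 → V) (hc : IsCycleOn A 3 c) (hc' : IsCycleOn A 3 c')
    (hdisj : Disjoint (Set.range c) (Set.range c'))
    (h1 : ∃ a ∈ Set.range c, ∃ b ∈ Set.range c', A a b)
    (h2 : ∃ a ∈ Set.range c', ∃ b ∈ Set.range c, A a b) :
    ∃ (m : ℕ) (d : ZMod m → V), 4 ≤ m ∧ IsCycleOn A m d ∧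
      Set.range d ⊆ Set.range c ∪ Set.range c' := by
  classical
  obtain ⟨a, ⟨i0, rfl⟩, b, ⟨j0, rfl⟩, hout0⟩ := h1
  obtain ⟨a', ⟨k0, rfl⟩, b', ⟨l0, rfl⟩, hin0⟩ := h2
  by_contra hno
  -- if some vertex of C has no arcs to or from C', we get a contradiction
  have isolated : ∀ m : ZMod 3, (∀ j, ¬ A (c m) (c' j)) → (∀ j, ¬ A (c' j) (c m)) → False := by
    intro m hiso1 hiso2
    have hp : ∀ j, p (c m) = p (c' j) := by
      intro j
      by_contra hne
      rcases hmt.total _ _ hne with h | h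
      · exact hiso1 j h
      · exact hiso2 j h
    have h01 : p (c' 0) = p (c' 1) := (hp 0).symm.trans (hp 1)
    have harc01 : A (c' 0) (c' 1) := by
      have := hc'.2.2 0
      rwa [show (0 : ZMod 3) + 1 = 1 by decide] at this
    exact hmt.not_adj_same _ _ h01 harc01
  -- key consequence of having no long cycle
  have key : ∀ i j k l : ZMod 3, A (c i) (c' j) → A (c' k) (c l) →
      (k = j + 1 ∧ i = l) ∨ (k = j ∧ i = l + 1) := by
    intro i j k l ho hi2
    by_cases habs : 2 ≤ (i - l).val + (k - j).val
    · exact absurd (bridge A c c' hc hc' hdisj ho hi2 habs) hno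
    · have h4 : ∀ a b : ZMod 3, ¬ 2 ≤ a.val + b.val →
          (a = 0 ∧ b = 0) ∨ (a = 0 ∧ b = 1) ∨ (a = 1 ∧ b = 0) := by decide
      have sub0 : ∀ a b : ZMod 3, a - b = 0 → a = b := by decide
      have sub1 : ∀ a b : ZMod 3, a - b = 1 → a = b + 1 := by decide
      rcases h4 _ _ habs with ⟨hs, ht⟩ | ⟨hs, ht⟩ | ⟨hs, ht⟩
      · -- i = l, k = j : contradicts asymmetry
        exfalso
        have hi3 : i = l := sub0 _ _ hs
        have hk3 : k = j := sub0 _ _ ht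
        subst hi3; subst hk3
        exact hmt.asymm _ _ ho hi2
      · exact Or.inl ⟨sub1 _ _ ht, sub0 _ _ hs⟩
      · exact Or.inr ⟨sub0 _ _ ht, sub1 _ _ hs⟩
  -- all C' → C arcs go from c' (j0+1) to c i0, or from c' j0 to c (i0-1)
  have in_sub : ∀ k l : ZMod 3, A (c' k) (c l) →
      (k = j0 + 1 ∧ l = i0) ∨ (k = j0 ∧ l = i0 - 1) := by
    intro k l h
    rcases key i0 j0 k l hout0 h with ⟨hk, hl⟩ | ⟨hk, hl⟩
    · exact Or.inl ⟨hk, hl.symm⟩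
    · refine Or.inr ⟨hk, ?_⟩
      have : ∀ a b : ZMod 3, a = b + 1 → b = a - 1 := by decide
      exact this _ _ hl
  -- z-mod-3 inequalities
  have zA : ∀ a : ZMod 3, a + 1 ≠ a := by decide
  have zB : ∀ a : ZMod 3, a + 1 ≠ a - 1 := by decide
  have zC : ∀ a : ZMod 3, a - 1 ≠ a := by decide
  have zD : ∀ a : ZMod 3, a - 1 ≠ a + 1 := by decide
  rcases key i0 j0 k0 l0 hout0 hin0 with ⟨hk0, hl0⟩ | ⟨hk0, hl0⟩
  · -- Case A : arc c' (j0+1) → c i0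
    have hinA : A (c' (j0 + 1)) (c i0) := by rw [hl0, ← hk0]; exact hin0
    have out_sub : ∀ i j : ZMod 3, A (c i) (c' j) →
        (i = i0 ∧ j = j0) ∨ (i = i0 + 1 ∧ j = j0 + 1) := by
      intro i j h
      rcases key i j (j0 + 1) i0 h hinA with ⟨hk, hl⟩ | ⟨hk, hl⟩
      · -- j0 + 1 = j + 1 and i = i0
        have hj : j = j0 := by
          have : ∀ a b : ZMod 3, a + 1 = b + 1 → b = a := by decide
          exact this _ _ hk
        exact Or.inl ⟨hl, hj⟩
      · exact Or.inr ⟨hl, hk.symm⟩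
    by_cases hA : A (c (i0 + 1)) (c' (j0 + 1))
    · -- then there is no arc c' j0 → c (i0 - 1)
      have hnoB : ¬ A (c' j0) (c (i0 - 1)) := by
        intro h
        rcases key (i0 + 1) (j0 + 1) j0 (i0 - 1) hA h with ⟨hk, _⟩ | ⟨hk, _⟩
        · exact (by decide : ∀ a : ZMod 3, a ≠ a + 1 + 1) j0 hk
        · exact (by decide : ∀ a : ZMod 3, a ≠ a + 1) j0 hk
      -- c (i0 - 1) is isolated
      refine isolated (i0 - 1) ?_ ?_
      · intro j h
        rcases out_sub _ _ h with ⟨hi, _⟩ | ⟨hi, _⟩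
        · exact zC i0 hi
        · exact zD i0 hi
      · intro j h
        rcases in_sub _ _ h with ⟨_, hl⟩ | ⟨hk, hl⟩
        · exact zC i0 hl
        · rw [hk] at h; exact hnoB h
    · -- c (i0 + 1) is isolated
      refine isolated (i0 + 1) ?_ ?_
      · intro j h
        rcases out_sub _ _ h with ⟨hi, _⟩ | ⟨hi, hj⟩
        · exact zA i0 hi
        · rw [hi, hj] at h; exact hA h
      · intro j h
        rcases in_sub _ _ h with ⟨_, hl⟩ | ⟨_, hl⟩
        · exact zA i0 hl
        · exact zB i0 hl
  · -- Case B : arc c' j0 → c (i0 - 1)   (since l0 = i0 - 1 : i0 = l0 + 1)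
    have hl0' : l0 = i0 - 1 := by
      have : ∀ a b : ZMod 3, a = b + 1 → b = a - 1 := by decide
      exact this _ _ hl0
    have hinB : A (c' j0) (c (i0 - 1)) := by rw [← hk0, ← hl0']; exact hin0
    have out_sub : ∀ i j : ZMod 3, A (c i) (c' j) →
        (i = i0 ∧ j = j0) ∨ (i = i0 - 1 ∧ j = j0 - 1) := by
      intro i j h
      rcases key i j j0 (i0 - 1) h hinB with ⟨hk, hl⟩ | ⟨hk, hl⟩
      · -- j0 = j + 1, i = i0 - 1
        have hj : j = j0 - 1 := by
          have : ∀ a b : ZMod 3, a = b + 1 → b = a - 1 := by decide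
          exact this _ _ hk
        exact Or.inr ⟨hl, hj⟩
      · -- j0 = j, i = (i0 - 1) + 1 = i0
        have hi : i = i0 := by
          rw [hl]
          have : ∀ a : ZMod 3, a - 1 + 1 = a := by decide
          exact this i0
        exact Or.inl ⟨hi, hk.symm⟩
    -- c (i0 + 1) is isolated
    refine isolated (i0 + 1) ?_ ?_
    · intro j h
      rcases out_sub _ _ h with ⟨hi, _⟩ | ⟨hi, _⟩
      · exact zA i0 hi
      · exact zB i0 hi
    · intro j h
      rcases in_sub _ _ h with ⟨_, hl⟩ | ⟨_, hl⟩
      · exact zA i0 hl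
      · exact zB i0 hl
end

section
/- Let D be a 3-partite tournament and let C_1, C_2, C_3 be three vertex-disjoint directed 3-cycles in D such that there is no arc from V(C_2) to V(C_1), no arc from V(C_3) to V(C_2), and no arc from V(C_1) to V(C_3). Then the subdigraph induced by V(C_1) ∪ V(C_2) ∪ V(C_3) contains two vertex-disjoint directed cycles of different lengths. -/
section Aux
variable {V : Type*} (A : V → V → Prop)

lemma zmod3_enum : ∀ n : ZMod 3, n = 0 ∨ n = 1 ∨ n = 2 := by decide
lemma zmod4_enum : ∀ n : ZMod 4, n = 0 ∨ n = 1 ∨ n = 2 ∨ n = 3 := by decide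

/-- Explicit 3-cycle map. -/
def cyc3 (x y z : V) : ZMod 3 → V := fun n => if n = 0 then x else if n = 1 then y else z

/-- Explicit 4-cycle map. -/
def cyc4_s8 (x y z w : V) : ZMod 4 → V :=
  fun n => if n = 0 then x else if n = 1 then y else if n = 2 then z else w

variable (x y z w : V)

lemma cyc3_0 : cyc3 x y z 0 = x := rfl
lemma cyc3_1 : cyc3 x y z 1 = y := by
  show (if (1 : ZMod 3) = 0 then x else if (1 : ZMod 3) = 1 then y else z) = y
  rw [if_neg (by decide), if_pos rfl]
lemma cyc3_2 : cyc3 x y z 2 = z := by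
  show (if (2 : ZMod 3) = 0 then x else if (2 : ZMod 3) = 1 then y else z) = z
  rw [if_neg (by decide), if_neg (by decide)]

lemma cyc4_0 : cyc4_s8 x y z w 0 = x := rfl
lemma cyc4_1 : cyc4_s8 x y z w 1 = y := by
  show (if (1 : ZMod 4) = 0 then x else if (1 : ZMod 4) = 1 then y
      else if (1 : ZMod 4) = 2 then z else w) = y
  rw [if_neg (by decide), if_pos rfl]
lemma cyc4_2 : cyc4_s8 x y z w 2 = z := by
  show (if (2 : ZMod 4) = 0 then x else if (2 : ZMod 4) = 1 then y
      else if (2 : ZMod 4) = 2 then z else w) = z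
  rw [if_neg (by decide), if_neg (by decide), if_pos rfl]
lemma cyc4_3 : cyc4_s8 x y z w 3 = w := by
  show (if (3 : ZMod 4) = 0 then x else if (3 : ZMod 4) = 1 then y
      else if (3 : ZMod 4) = 2 then z else w) = w
  rw [if_neg (by decide), if_neg (by decide), if_neg (by decide)]

lemma range_cyc3 : Set.range (cyc3 x y z) = {x, y, z} := by
  ext v
  constructor
  · rintro ⟨n, rfl⟩
    rcases zmod3_enum n with rfl | rfl | rfl <;>
      simp [cyc3_0, cyc3_1, cyc3_2]
  · rintro (h | h | h)
    exacts [⟨0, by rw [cyc3_0, h]⟩, ⟨1, by rw [cyc3_1, h]⟩, ⟨2, by rw [cyc3_2, h]⟩]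

lemma range_cyc4 : Set.range (cyc4_s8 x y z w) = {x, y, z, w} := by
  ext v
  constructor
  · rintro ⟨n, rfl⟩
    rcases zmod4_enum n with rfl | rfl | rfl | rfl <;>
      simp [cyc4_0, cyc4_1, cyc4_2, cyc4_3]
  · rintro (h | h | h | h)
    exacts [⟨0, by rw [cyc4_0, h]⟩, ⟨1, by rw [cyc4_1, h]⟩, ⟨2, by rw [cyc4_2, h]⟩,
      ⟨3, by rw [cyc4_3, h]⟩]

lemma isCycleOn_cyc3 (hxy : x ≠ y) (hxz : x ≠ z) (hyz : y ≠ z)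
    (a1 : A x y) (a2 : A y z) (a3 : A z x) : IsCycleOn A 3 (cyc3 x y z) := by
  refine ⟨by norm_num, ?_, ?_⟩
  · intro a b hab
    rcases zmod3_enum a with rfl | rfl | rfl <;> rcases zmod3_enum b with rfl | rfl | rfl <;>
      simp only [cyc3_0, cyc3_1, cyc3_2] at hab <;>
      first
        | rfl
        | exact absurd hab hxy | exact absurd hab hxz | exact absurd hab hyz
        | exact absurd hab.symm hxy | exact absurd hab.symm hxz | exact absurd hab.symm hyz
  · intro n
    rcases zmod3_enum n with rfl | rfl | rfl
    · rw [show (0 : ZMod 3) + 1 = 1 by decide, cyc3_0, cyc3_1]; exact a1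
    · rw [show (1 : ZMod 3) + 1 = 2 by decide, cyc3_1, cyc3_2]; exact a2
    · rw [show (2 : ZMod 3) + 1 = 0 by decide, cyc3_2, cyc3_0]; exact a3

lemma isCycleOn_cyc4 (hxy : x ≠ y) (hxz : x ≠ z) (hxw : x ≠ w)
    (hyz : y ≠ z) (hyw : y ≠ w) (hzw : z ≠ w)
    (a1 : A x y) (a2 : A y z) (a3 : A z w) (a4 : A w x) : IsCycleOn A 4 (cyc4_s8 x y z w) := by
  refine ⟨by norm_num, ?_, ?_⟩
  · intro a b hab
    rcases zmod4_enum a with rfl | rfl | rfl | rfl <;>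
      rcases zmod4_enum b with rfl | rfl | rfl | rfl <;>
      simp only [cyc4_0, cyc4_1, cyc4_2, cyc4_3] at hab <;>
      first
        | rfl
        | exact absurd hab hxy | exact absurd hab hxz | exact absurd hab hxw
        | exact absurd hab hyz | exact absurd hab hyw | exact absurd hab hzw
        | exact absurd hab.symm hxy | exact absurd hab.symm hxz | exact absurd hab.symm hxw
        | exact absurd hab.symm hyz | exact absurd hab.symm hyw | exact absurd hab.symm hzw
  · intro n
    rcases zmod4_enum n with rfl | rfl | rfl | rfl
    · rw [show (0 : ZMod 4) + 1 = 1 by decide, cyc4_0, cyc4_1]; exact a1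
    · rw [show (1 : ZMod 4) + 1 = 2 by decide, cyc4_1, cyc4_2]; exact a2
    · rw [show (2 : ZMod 4) + 1 = 3 by decide, cyc4_2, cyc4_3]; exact a3
    · rw [show (3 : ZMod 4) + 1 = 0 by decide, cyc4_3, cyc4_0]; exact a4

end Aux

set_option synthInstance.maxHeartbeats 2000000 in
set_option synthInstance.maxSize 512 in
set_option maxHeartbeats 4000000 in
set_option maxRecDepth 100000 in
lemma combo_aux : ∀ f1 f2 f3 : ZMod 3 → Fin 3,
    (∀ a b, f1 a = f1 b → a = b) → (∀ a b, f2 a = f2 b → a = b) → (∀ a b, f3 a = f3 b → a = b) →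
    ∃ i j k j' k' : ZMod 3, j ≠ j' ∧ k ≠ k' ∧
      f1 (i+1) ≠ f2 j ∧ f2 j ≠ f3 k ∧ f3 k ≠ f1 i ∧
      f1 (i+2) ≠ f2 j' ∧ f2 j' ≠ f3 k' ∧ f3 k' ≠ f1 (i+2) := by decide

/-- If `C₁`, `C₂`, `C₃` are vertex-disjoint directed 3-cycles in a 3-partite tournament with
no arc from `V(C₂)` to `V(C₁)`, none from `V(C₃)` to `V(C₂)` and none from `V(C₁)` to
`V(C₃)`, then the subdigraph induced by `V(C₁) ∪ V(C₂) ∪ V(C₃)` contains two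
vertex-disjoint directed cycles of different lengths. -/
theorem stmt_8 {V : Type*} (A : V → V → Prop) (p : V → Fin 3)
    (hp : Function.Surjective p) (hmt : IsMultipartiteTournament A p)
    (c₁ c₂ c₃ : ZMod 3 → V)
    (hc₁ : IsCycleOn A 3 c₁) (hc₂ : IsCycleOn A 3 c₂) (hc₃ : IsCycleOn A 3 c₃)
    (h12 : Disjoint (Set.range c₁) (Set.range c₂))
    (h23 : Disjoint (Set.range c₂) (Set.range c₃))
    (h13 : Disjoint (Set.range c₁) (Set.range c₃))
    (ha21 : ∀ a ∈ Set.range c₂, ∀ b ∈ Set.range c₁, ¬ A a b)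
    (ha32 : ∀ a ∈ Set.range c₃, ∀ b ∈ Set.range c₂, ¬ A a b)
    (ha13 : ∀ a ∈ Set.range c₁, ∀ b ∈ Set.range c₃, ¬ A a b) :
    ∃ (m₁ m₂ : ℕ) (d₁ : ZMod m₁ → V) (d₂ : ZMod m₂ → V),
      IsCycleOn A m₁ d₁ ∧ IsCycleOn A m₂ d₂ ∧ m₁ ≠ m₂ ∧
      Disjoint (Set.range d₁) (Set.range d₂) ∧
      Set.range d₁ ∪ Set.range d₂ ⊆ Set.range c₁ ∪ Set.range c₂ ∪ Set.range c₃ := by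
  -- any two distinct vertices of a 3-cycle are adjacent
  have adj : ∀ c : ZMod 3 → V, IsCycleOn A 3 c → ∀ s t : ZMod 3, s ≠ t →
      A (c s) (c t) ∨ A (c t) (c s) := by
    intro c hc s t hst
    have key : ∀ s t : ZMod 3, s ≠ t → t = s + 1 ∨ s = t + 1 := by decide
    have h := key s t hst
    rcases h with rfl | h
    · exact Or.inl (hc.2.2 s)
    · refine Or.inr ?_
      have := hc.2.2 t
      rwa [← h] at this
  -- the three vertices of a 3-cycle lie in pairwise different parts
  have pinj : ∀ c : ZMod 3 → V, IsCycleOn A 3 c → ∀ a b, p (c a) = p (c b) → a = b := by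
    intro c hc a b hab
    by_contra hne
    rcases adj c hc a b hne with h | h
    · exact hmt.not_adj_same _ _ hab h
    · exact hmt.not_adj_same _ _ hab.symm h
  -- all arcs between the cycles go C₁ → C₂ → C₃ → C₁
  have a12 : ∀ s t, p (c₁ s) ≠ p (c₂ t) → A (c₁ s) (c₂ t) := fun s t h =>
    (hmt.total _ _ h).resolve_right (ha21 _ ⟨t, rfl⟩ _ ⟨s, rfl⟩)
  have a23 : ∀ s t, p (c₂ s) ≠ p (c₃ t) → A (c₂ s) (c₃ t) := fun s t h =>
    (hmt.total _ _ h).resolve_right (ha32 _ ⟨t, rfl⟩ _ ⟨s, rfl⟩)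
  have a31 : ∀ s t, p (c₃ s) ≠ p (c₁ t) → A (c₃ s) (c₁ t) := fun s t h =>
    (hmt.total _ _ h).resolve_right (ha13 _ ⟨t, rfl⟩ _ ⟨s, rfl⟩)
  -- vertices of different cycles are different
  have ne12 : ∀ s t, c₁ s ≠ c₂ t := fun s t h => Set.disjoint_left.mp h12 ⟨s, rfl⟩ ⟨t, h.symm⟩
  have ne23 : ∀ s t, c₂ s ≠ c₃ t := fun s t h => Set.disjoint_left.mp h23 ⟨s, rfl⟩ ⟨t, h.symm⟩
  have ne13 : ∀ s t, c₁ s ≠ c₃ t := fun s t h => Set.disjoint_left.mp h13 ⟨s, rfl⟩ ⟨t, h.symm⟩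
  have nec : ∀ c : ZMod 3 → V, IsCycleOn A 3 c → ∀ s t : ZMod 3, s ≠ t → c s ≠ c t :=
    fun c hc s t h he => h (hc.2.1 he)
  obtain ⟨i, j, k, j', k', hjj', hkk', q1, q2, q3, q4, q5, q6⟩ :=
    combo_aux (fun s => p (c₁ s)) (fun s => p (c₂ s)) (fun s => p (c₃ s))
      (pinj c₁ hc₁) (pinj c₂ hc₂) (pinj c₃ hc₃)
  have hiz' : ∀ n : ZMod 3, n ≠ n + 1 ∧ n ≠ n + 2 ∧ n + 1 ≠ n + 2 := by decide
  have hiz := hiz' i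
  refine ⟨4, 3, cyc4_s8 (c₁ i) (c₁ (i+1)) (c₂ j) (c₃ k),
    cyc3 (c₁ (i+2)) (c₂ j') (c₃ k'), ?_, ?_, by norm_num, ?_, ?_⟩
  · exact isCycleOn_cyc4 A _ _ _ _ (nec c₁ hc₁ _ _ hiz.1) (ne12 _ _) (ne13 _ _)
      (ne12 _ _) (ne13 _ _) (ne23 _ _)
      (hc₁.2.2 i) (a12 _ _ q1) (a23 _ _ q2) (a31 _ _ q3)
  · exact isCycleOn_cyc3 A _ _ _ (ne12 _ _) (ne13 _ _) (ne23 _ _)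
      (a12 _ _ q4) (a23 _ _ q5) (a31 _ _ q6)
  · rw [range_cyc4, range_cyc3, Set.disjoint_left]
    intro x hx hy
    simp only [Set.mem_insert_iff, Set.mem_singleton_iff] at hx hy
    have n1 : c₁ i ≠ c₁ (i + 2) := nec c₁ hc₁ _ _ hiz.2.1
    have n2 : c₁ (i + 1) ≠ c₁ (i + 2) := nec c₁ hc₁ _ _ hiz.2.2
    have n3 : c₂ j ≠ c₂ j' := nec c₂ hc₂ _ _ hjj'
    have n4 : c₃ k ≠ c₃ k' := nec c₃ hc₃ _ _ hkk'
    rcases hx with rfl | rfl | rfl | rfl <;> rcases hy with h | h | h <;>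
      first
        | exact n1 h | exact n2 h | exact n3 h | exact n4 h
        | exact ne12 _ _ h | exact ne13 _ _ h
        | exact ne12 _ _ h.symm | exact ne13 _ _ h.symm
        | exact ne23 _ _ h | exact ne23 _ _ h.symm
  · rw [range_cyc4, range_cyc3]
    intro x hx
    simp only [Set.mem_union, Set.mem_insert_iff, Set.mem_singleton_iff] at hx
    rcases hx with (rfl | rfl | rfl | rfl) | (rfl | rfl | rfl)
    · exact Or.inl (Or.inl ⟨i, rfl⟩)
    · exact Or.inl (Or.inl ⟨i + 1, rfl⟩)
    · exact Or.inl (Or.inr ⟨j, rfl⟩)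
    · exact Or.inr ⟨k, rfl⟩
    · exact Or.inl (Or.inl ⟨i + 2, rfl⟩)
    · exact Or.inl (Or.inr ⟨j', rfl⟩)
    · exact Or.inr ⟨k', rfl⟩
end
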